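/- Generalized score matching partial-integration identity in one dimension: if h, h* are positive differentiable densities on (0,∞), v : (0,∞) → (0,∞) is differentiable, and lim_{z→0⁺} h*(z)v(z)(log h)'(z) = lim_{z→∞} h*(z)v(z)(log h)'(z) = 0, with all integrals finite, then ∫ v(z)(log h)'(z)(log h*)'(z) h*(z)dz = −∫ [v'(z)(log h)'(z) + v(z)(log h)''(z)] h*(z)dz. -/

import Mathlib

/-!
Since `h*' = (log h*)' h*`, the sum of the two integrands is the derivative of the boundary term
`h* v (log h)'`. By the fundamental theorem of calculus on `(0, ∞)` its integral is the difference
of the boundary limits, which both vanish.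
-/

open MeasureTheory Set Filter

/-- Unlike `integral_Ioi_of_hasDerivAt_of_tendsto`, `f` need not be continuous at `a`: a limit
at `a⁺` suffices. -/
theorem integral_Ioi_of_hasDerivAt_of_tendsto_nhdsGT {E : Type*} [NormedAddCommGroup E]
    [NormedSpace ℝ E] [CompleteSpace E] {f f' : ℝ → E} {a : ℝ} {fa m : E}
    (hderiv : ∀ x ∈ Ioi a, HasDerivAt f (f' x) x) (f'int : IntegrableOn f' (Ioi a))
    (ha : Tendsto f (nhdsWithin a (Ioi a)) (nhds fa)) (hm : Tendsto f atTop (nhds m)) :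
    ∫ x in Ioi a, f' x = m - fa := by
  have hcont : ContinuousWithinAt (Function.update f a fa) (Ici a) a := by
    rwa [continuousWithinAt_update_same, Ici_sdiff_left]
  have hderiv' : ∀ x ∈ Ioi a, HasDerivAt (Function.update f a fa) (f' x) x := fun x hx =>
    (hderiv x hx).congr_of_eventuallyEq <| by
      filter_upwards [Ioi_mem_nhds hx] with y hy using Function.update_of_ne hy.ne' _ _
  have hm' : Tendsto (Function.update f a fa) atTop (nhds m) :=
    hm.congr' <| by
      filter_upwards [Ioi_mem_atTop a] with y hy using (Function.update_of_ne hy.ne' _ _).symm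
  simpa using integral_Ioi_of_hasDerivAt_of_tendsto hcont hderiv' f'int hm'

theorem hasDerivAt_mul_of_deriv_log {p q : ℝ → ℝ} {q' x : ℝ} (hp : DifferentiableAt ℝ p x)
    (hpx : p x ≠ 0) (hq : HasDerivAt q q' x) :
    HasDerivAt (fun t => p t * q t)
      ((q x * deriv (fun t => Real.log (p t)) x + q') * p x) x := by
  have hscore : deriv (fun t => Real.log (p t)) x = deriv p x / p x :=
    (hp.hasDerivAt.log hpx).deriv
  refine (hp.hasDerivAt.fun_mul hq).congr_deriv ?_
  rw [hscore]
  field_simp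

theorem gsm_partial_integration_general (h hstar v : ℝ → ℝ)
    (hpos : ∀ z ∈ Ioi (0 : ℝ), 0 < h z)
    (hspos : ∀ z ∈ Ioi (0 : ℝ), 0 < hstar z)
    (hh : ContDiffOn ℝ 2 h (Ioi 0)) (hhs : ContDiffOn ℝ 2 hstar (Ioi 0))
    (hv : ContDiffOn ℝ 1 v (Ioi 0))
    (hb0 : Tendsto (fun z => hstar z * v z * deriv (fun t => Real.log (h t)) z)
      (nhdsWithin 0 (Ioi 0)) (nhds 0))
    (hbinf : Tendsto (fun z => hstar z * v z * deriv (fun t => Real.log (h t)) z)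
      atTop (nhds 0))
    (hint1 : IntegrableOn (fun z =>
      v z * deriv (fun t => Real.log (h t)) z
        * deriv (fun t => Real.log (hstar t)) z * hstar z) (Ioi 0))
    (hint2 : IntegrableOn (fun z =>
      (deriv v z * deriv (fun t => Real.log (h t)) z
        + v z * deriv (deriv (fun t => Real.log (h t))) z) * hstar z) (Ioi 0)) :
    (∫ z in Ioi (0 : ℝ), v z * deriv (fun t => Real.log (h t)) z
        * deriv (fun t => Real.log (hstar t)) z * hstar z)
      = -∫ z in Ioi (0 : ℝ),
          (deriv v z * deriv (fun t => Real.log (h t)) z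
            + v z * deriv (deriv (fun t => Real.log (h t))) z) * hstar z := by
  set L := deriv (fun t => Real.log (h t))
  have hL : DifferentiableOn ℝ L (Ioi 0) :=
    ((hh.log fun z hz => (hpos z hz).ne').deriv_of_isOpen (m := 1) isOpen_Ioi
      (by norm_num)).differentiableOn one_ne_zero
  have hderiv : ∀ z ∈ Ioi (0 : ℝ), HasDerivAt (fun z => hstar z * v z * L z)
      (v z * L z * deriv (fun t => Real.log (hstar t)) z * hstar z
        + (deriv v z * L z + v z * deriv L z) * hstar z) z := by
    intro z hz
    have hdv := ((hv.differentiableOn one_ne_zero).differentiableAt (Ioi_mem_nhds hz)).hasDerivAt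
    have hdL := (hL.differentiableAt (Ioi_mem_nhds hz)).hasDerivAt
    convert hasDerivAt_mul_of_deriv_log
      ((hhs.differentiableOn two_ne_zero).differentiableAt (Ioi_mem_nhds hz))
      (hspos z hz).ne' (hdv.fun_mul hdL) using 1
    · simp only [mul_assoc]
    · ring
  have htotal := integral_Ioi_of_hasDerivAt_of_tendsto_nhdsGT hderiv (hint1.add hint2) hb0 hbinf
  rw [integral_add hint1 hint2, sub_zero] at htotal
  linarith

/-- Generalized score matching partial-integration identity in one dimension:
under vanishing boundary terms and integrability,
`∫ v (log h)' (log h*)' h* = −∫ [v' (log h)' + v (log h)''] h*` on `(0,∞)`. -/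
theorem gsm_partial_integration (h hstar v : ℝ → ℝ)
    (hpos : ∀ z ∈ Ioi (0 : ℝ), 0 < h z)
    (hspos : ∀ z ∈ Ioi (0 : ℝ), 0 < hstar z)
    (hvpos : ∀ z ∈ Ioi (0 : ℝ), 0 < v z)
    (hh : ContDiffOn ℝ 2 h (Ioi 0)) (hhs : ContDiffOn ℝ 2 hstar (Ioi 0))
    (hv : ContDiffOn ℝ 1 v (Ioi 0))
    (hnorm : ∫ z in Ioi (0 : ℝ), hstar z = 1)
    (hb0 : Tendsto (fun z => hstar z * v z * deriv (fun t => Real.log (h t)) z)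
      (nhdsWithin 0 (Ioi 0)) (nhds 0))
    (hbinf : Tendsto (fun z => hstar z * v z * deriv (fun t => Real.log (h t)) z)
      atTop (nhds 0))
    (hint1 : IntegrableOn (fun z =>
      v z * deriv (fun t => Real.log (h t)) z
        * deriv (fun t => Real.log (hstar t)) z * hstar z) (Ioi 0))
    (hint2 : IntegrableOn (fun z =>
      (deriv v z * deriv (fun t => Real.log (h t)) z
        + v z * deriv (deriv (fun t => Real.log (h t))) z) * hstar z) (Ioi 0)) :
    (∫ z in Ioi (0 : ℝ), v z * deriv (fun t => Real.log (h t)) z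
        * deriv (fun t => Real.log (hstar t)) z * hstar z)
      = -∫ z in Ioi (0 : ℝ),
          (deriv v z * deriv (fun t => Real.log (h t)) z
            + v z * deriv (deriv (fun t => Real.log (h t))) z) * hstar z :=
  gsm_partial_integration_general h hstar v hpos hspos hh hhs hv hb0 hbinf hint1 hint2
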